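/- arXiv:1710.09095 — 2 statements merged into one kernel-verified Lean document; each statement's English description precedes it below -/
import Mathlib

section
/- Let L be a positive integer, let F(z) = ∑_{n=0}^{N} f(n) z^{−n} with real coefficients f(0), …, f(N) and F(1) = √2 (2L+1) 2^{−2L}, and set H_0(z) = F(z) D_L(z) and G_0(z) = F(z) D_L(1/z) z^{−L} for z ∈ ℂ \ {0}. Assume that for every ω ∈ ℝ the infinite product φ̂_H(ω) = ∏_{j=1}^{∞} 2^{−1/2} H_0(e^{i 2^{−j} ω}) converges (is multipliable), and define φ̂_G analogously from G_0. Set H_1(z) = z^{−1} H_0(−z^{−1}) and G_1(z) = z^{−1} G_0(−z^{−1}), and define ψ̂_H(ω) = 2^{−1/2} H_1(e^{iω/2}) φ̂_H(ω/2) and ψ̂_G(ω) = 2^{−1/2} G_1(e^{iω/2}) φ̂_G(ω/2). Then for every ω ∈ ℝ, ψ̂_G(ω) = i · e^{i η_L(ω)} · ψ̂_H(ω). -/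
open Complex
open scoped Classical

/-- The Thiran common factor `D_L` (closed binomial form). -/
noncomputable def DL (L : ℕ) (z : ℂ) : ℂ :=
  (1 / (2 * (L : ℂ) + 1)) *
    ∑ n ∈ Finset.range (L + 1), (Nat.choose (2 * L + 1) (2 * n) : ℂ) * z ^ ((n : ℤ) - (L : ℤ))

/-- The phase function `α_L`, with the convention `arctan(±∞) = ±π/2` at the
points `ω ∈ 2π + 4πℤ`. -/
noncomputable def alphaL (L : ℕ) (ω : ℝ) : ℝ :=
  if ∃ k : ℤ, ω = 2 * Real.pi + 4 * Real.pi * k then (-1 : ℝ) ^ L * Real.pi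
  else 2 * (-1 : ℝ) ^ L * Real.arctan (Real.tan (ω / 4) ^ (2 * L + 1))

/-- The phase function `β_L(ω) = ∑_{j=1}^∞ α_L(2^{-j} ω)`. -/
noncomputable def betaL (L : ℕ) (ω : ℝ) : ℝ :=
  ∑' j : ℕ, alphaL L (ω / 2 ^ (j + 1))

/-- The phase function `η_L(ω) = -α_L(ω/2 + π) + β_L(ω/2)`. -/
noncomputable def etaL (L : ℕ) (ω : ℝ) : ℝ :=
  -alphaL L (ω / 2 + Real.pi) + betaL L (ω / 2)

open scoped Real

/-! On the unit circle write `z = w²` with `w = e^{iθ/2}`. The binomial form of `D_L` gives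
`2(2L+1) w^{2L} D_L(w²) = (1+w)^{2L+1} + (1-w)^{2L+1}`, and substituting `w ↦ w⁻¹` turns
the sum into the difference `(1+w)^{2L+1} - (1-w)^{2L+1}`. Since `1 + w = 2 cos(θ/4) e^{iθ/4}`
and `1 - w = -2i sin(θ/4) e^{iθ/4}`, difference and sum are `c ± i(-1)^L s` up to a common
factor, with `c = cos^{2L+1}(θ/4)`, `s = sin^{2L+1}(θ/4)`, and their quotient is `e^{iα_L(θ)}`.
Hence `G_0 = e^{i(α_L(θ) - θ/2)} H_0` on the circle; the phases of the infinite product add up to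
`β_L(ω) - ω/2`, and evaluating the high-pass filters at `-e^{-iω/2}` leaves the phase
`π/2 + η_L(ω)`. -/

theorem Finset.sum_range_two_mul_add_two {M : Type*} [AddCommMonoid M] (g : ℕ → M) (m : ℕ) :
    ∑ k ∈ Finset.range (2 * m + 2), g k
      = ∑ n ∈ Finset.range (m + 1), (g (2 * n) + g (2 * n + 1)) := by
  induction m with
  | zero => simp [Finset.sum_range_succ]
  | succ m ih =>
    rw [show 2 * (m + 1) + 2 = 2 * m + 2 + 1 + 1 by ring, Finset.sum_range_succ,
      Finset.sum_range_succ, ih, Finset.sum_range_succ (n := m + 1), add_assoc]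
    rfl

theorem one_add_pow_add_one_sub_pow {R : Type*} [CommRing R] (m : ℕ) (w : R) :
    (1 + w) ^ (2 * m + 1) + (1 - w) ^ (2 * m + 1)
      = 2 * ∑ n ∈ Finset.range (m + 1), ((2 * m + 1).choose (2 * n) : R) * w ^ (2 * n) := by
  simp only [sub_eq_add_neg, add_comm (1 : R), add_pow, one_pow, mul_one,
    ← Finset.sum_add_distrib, Finset.sum_range_two_mul_add_two, Finset.mul_sum,
    (even_two_mul _).neg_pow, (odd_two_mul_add_one _).neg_pow]
  refine Finset.sum_congr rfl fun n _ => ?_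
  ring

theorem DL_sq (L : ℕ) {w : ℂ} (hw : w ≠ 0) :
    DL L (w ^ 2)
      = ((1 + w) ^ (2 * L + 1) + (1 - w) ^ (2 * L + 1)) / (2 * (2 * L + 1) * w ^ (2 * L)) := by
  have hzpow (n : ℕ) : (w ^ 2) ^ ((n : ℤ) - L) = w ^ (2 * n) / w ^ (2 * L) := by
    rw [zpow_sub₀ (pow_ne_zero 2 hw), zpow_natCast, zpow_natCast, ← pow_mul, ← pow_mul]
  simp only [DL, one_add_pow_add_one_sub_pow, hzpow, Finset.mul_sum, Finset.sum_div]
  refine Finset.sum_congr rfl fun n _ => ?_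
  field_simp

theorem DL_inv_sq_mul_zpow (L : ℕ) {w u : ℂ} (hw : w ≠ 0)
    (h : (1 + w) ^ (2 * L + 1) - (1 - w) ^ (2 * L + 1)
      = u * ((1 + w) ^ (2 * L + 1) + (1 - w) ^ (2 * L + 1))) :
    DL L (1 / w ^ 2) * (w ^ 2) ^ (-(L : ℤ)) = u * w⁻¹ * DL L (w ^ 2) := by
  have hinv : (1 + w⁻¹) ^ (2 * L + 1) + (1 - w⁻¹) ^ (2 * L + 1)
      = ((1 + w) ^ (2 * L + 1) - (1 - w) ^ (2 * L + 1)) / w ^ (2 * L + 1) := by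
    rw [show 1 + w⁻¹ = (1 + w) / w by field_simp; ring,
      show 1 - w⁻¹ = -(1 - w) / w by field_simp; ring, div_pow, div_pow,
      (odd_two_mul_add_one L).neg_pow]
    ring
  rw [one_div, ← inv_pow, DL_sq L (inv_ne_zero hw), DL_sq L hw, hinv, h, zpow_neg, zpow_natCast,
    ← pow_mul, inv_pow]
  field_simp
  ring

theorem one_add_exp_I_mul_two_mul (x : ℂ) :
    1 + cexp (I * (2 * x)) = 2 * Complex.cos x * cexp (I * x) := by
  rw [Complex.cos, show I * (2 * x) = I * x + x * I by ring, Complex.exp_add,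
    neg_mul x, Complex.exp_neg, mul_comm x]
  field_simp
  ring

theorem one_sub_exp_I_mul_two_mul (x : ℂ) :
    1 - cexp (I * (2 * x)) = -2 * I * Complex.sin x * cexp (I * x) := by
  rw [Complex.sin, show I * (2 * x) = I * x + x * I by ring, Complex.exp_add,
    neg_mul x, Complex.exp_neg, mul_comm x]
  field_simp
  linear_combination (1 - cexp (I * x) ^ 2) * Complex.I_sq

theorem exp_I_mul_arctan_mul_sqrt (u : ℝ) :
    cexp (I * Real.arctan u) * (Real.sqrt (1 + u ^ 2) : ℂ) = 1 + I * u := by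
  have hs : (Real.sqrt (1 + u ^ 2) : ℂ) ≠ 0 :=
    Complex.ofReal_ne_zero.2 (Real.sqrt_pos.2 (by positivity)).ne'
  rw [mul_comm I, Complex.exp_mul_I, ← Complex.ofReal_cos, ← Complex.ofReal_sin,
    Real.cos_arctan, Real.sin_arctan]
  push_cast
  field_simp

theorem exp_I_mul_two_mul_arctan_mul (u : ℝ) :
    cexp (I * (2 * Real.arctan u : ℝ)) * (1 - I * u) = 1 + I * u := by
  have hs : (Real.sqrt (1 + u ^ 2) : ℂ) ≠ 0 :=
    Complex.ofReal_ne_zero.2 (Real.sqrt_pos.2 (by positivity)).ne'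
  have hplus := exp_I_mul_arctan_mul_sqrt u
  have hminus := exp_I_mul_arctan_mul_sqrt (-u)
  rw [Real.arctan_neg, neg_sq, Complex.ofReal_neg, Complex.ofReal_neg] at hminus
  rw [Complex.ofReal_mul, Complex.ofReal_ofNat]
  set E := cexp (I * Real.arctan u)
  have hE2 : cexp (I * (2 * Real.arctan u)) = E ^ 2 := by
    rw [← Complex.exp_nat_mul]; ring_nf
  have hEinv : E * cexp (I * -Real.arctan u) = 1 := by
    rw [← Complex.exp_add]; ring_nf; exact Complex.exp_zero
  rw [hE2]
  linear_combination -E ^ 2 * hminus + E * (Real.sqrt (1 + u ^ 2) : ℂ) * hEinv + hplus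

theorem exp_I_mul_two_mul_arctan_div_mul {a : ℝ} (ha : a ≠ 0) (b : ℝ) :
    cexp (I * (2 * Real.arctan (b / a) : ℝ)) * (a - I * b) = a + I * b := by
  have h := congrArg (· * (a : ℂ)) (exp_I_mul_two_mul_arctan_mul (b / a))
  have ha' : (a : ℂ) ≠ 0 := Complex.ofReal_ne_zero.2 ha
  simp only [Complex.ofReal_div] at h
  field_simp at h
  linear_combination h

theorem exp_I_mul_neg_one_pow_mul_pi (L : ℕ) :
    cexp (I * ((-1 : ℝ) ^ L * π : ℝ)) = -1 := by
  rcases neg_one_pow_eq_or ℝ L with h | h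
  · rw [h, one_mul, mul_comm, Complex.exp_pi_mul_I]
  · rw [h]
    push_cast
    rw [show I * (-1 * π) = -(π * I) by ring, Complex.exp_neg_pi_mul_I]

theorem exp_I_mul_alphaL_mul (L : ℕ) (θ : ℝ) :
    cexp (I * alphaL L θ)
        * ((Real.cos (θ / 4) ^ (2 * L + 1) : ℝ)
          - I * ((-1) ^ L * Real.sin (θ / 4) ^ (2 * L + 1) : ℝ))
      = (Real.cos (θ / 4) ^ (2 * L + 1) : ℝ)
          + I * ((-1) ^ L * Real.sin (θ / 4) ^ (2 * L + 1) : ℝ) := by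
  rw [alphaL]
  split_ifs with h
  · obtain ⟨k, rfl⟩ := h
    have hcos : Real.cos ((2 * π + 4 * π * k) / 4) = 0 :=
      Real.cos_eq_zero_iff.2 ⟨k, by ring⟩
    rw [hcos, exp_I_mul_neg_one_pow_mul_pi]
    push_cast
    ring
  · have hcos : Real.cos (θ / 4) ^ (2 * L + 1) ≠ 0 := by
      refine pow_ne_zero _ fun hcos => h ?_
      obtain ⟨k, hk⟩ := Real.cos_eq_zero_iff.1 hcos
      exact ⟨k, by linarith⟩
    have hratio : (-1) ^ L * Real.sin (θ / 4) ^ (2 * L + 1) / Real.cos (θ / 4) ^ (2 * L + 1)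
        = (-1) ^ L * Real.tan (θ / 4) ^ (2 * L + 1) := by
      rw [Real.tan_eq_sin_div_cos, div_pow, mul_div_assoc]
    have harctan : 2 * (-1) ^ L * Real.arctan (Real.tan (θ / 4) ^ (2 * L + 1))
        = 2 * Real.arctan
            ((-1) ^ L * Real.sin (θ / 4) ^ (2 * L + 1) / Real.cos (θ / 4) ^ (2 * L + 1)) := by
      rw [hratio]
      rcases neg_one_pow_eq_or ℝ L with hε | hε
      · rw [hε, one_mul, mul_one]
      · rw [hε, neg_one_mul, Real.arctan_neg]
        ring
    rw [harctan]
    exact exp_I_mul_two_mul_arctan_div_mul hcos _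

theorem one_add_exp_pow_sub_one_sub_exp_pow (L : ℕ) (θ : ℝ) :
    (1 + cexp (I * (θ / 2 : ℝ))) ^ (2 * L + 1)
        - (1 - cexp (I * (θ / 2 : ℝ))) ^ (2 * L + 1)
      = cexp (I * alphaL L θ) *
          ((1 + cexp (I * (θ / 2 : ℝ))) ^ (2 * L + 1)
            + (1 - cexp (I * (θ / 2 : ℝ))) ^ (2 * L + 1)) := by
  have hhalf : ((θ / 2 : ℝ) : ℂ) = 2 * (θ / 4 : ℝ) := by push_cast; ring
  have hI : I ^ (2 * L + 1) = (-1) ^ L * I := by rw [pow_succ, pow_mul, Complex.I_sq]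
  have hkey := exp_I_mul_alphaL_mul L θ
  simp only [Complex.ofReal_pow, Complex.ofReal_mul, Complex.ofReal_cos, Complex.ofReal_sin,
    Complex.ofReal_neg, Complex.ofReal_one] at hkey
  rw [hhalf, one_add_exp_I_mul_two_mul, one_sub_exp_I_mul_two_mul, mul_pow, mul_pow, mul_pow,
    mul_pow, mul_pow, hI, (odd_two_mul_add_one L).neg_pow]
  linear_combination (-((2 : ℂ) ^ (2 * L + 1) * cexp (I * (θ / 4 : ℝ)) ^ (2 * L + 1))) * hkey

theorem DL_inv_mul_zpow_exp (L : ℕ) (θ : ℝ) :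
    DL L (1 / cexp (I * θ)) * cexp (I * θ) ^ (-(L : ℤ))
      = cexp (I * (alphaL L θ - θ / 2 : ℝ)) * DL L (cexp (I * θ)) := by
  set w := cexp (I * (θ / 2 : ℝ))
  have hsq : cexp (I * θ) = w ^ 2 := by
    rw [← Complex.exp_nat_mul]; push_cast; ring_nf
  have hphase : cexp (I * (alphaL L θ - θ / 2 : ℝ))
      = cexp (I * alphaL L θ) * w⁻¹ := by
    rw [← Complex.exp_neg, ← Complex.exp_add]; push_cast; ring_nf
  rw [hsq, hphase,
    DL_inv_sq_mul_zpow L (Complex.exp_ne_zero _) (one_add_exp_pow_sub_one_sub_exp_pow L θ)]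

theorem lowpass_exp_eq_exp_mul_of_commonFactor {F H0 G0 : ℂ → ℂ} (L : ℕ)
    (hH0 : ∀ z : ℂ, z ≠ 0 → H0 z = F z * DL L z)
    (hG0 : ∀ z : ℂ, z ≠ 0 → G0 z = F z * DL L (1 / z) * z ^ (-(L : ℤ))) (θ : ℝ) :
    G0 (cexp (I * θ))
      = cexp (I * (alphaL L θ - θ / 2 : ℝ)) * H0 (cexp (I * θ)) := by
  rw [hG0 _ (Complex.exp_ne_zero _), hH0 _ (Complex.exp_ne_zero _), mul_assoc, DL_inv_mul_zpow_exp]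
  ring

theorem Real.abs_arctan_le_abs (y : ℝ) : |Real.arctan y| ≤ |y| := by
  have arctan_le_self {y : ℝ} (hy : 0 ≤ y) : Real.arctan y ≤ y := by
    simpa only [Real.tan_arctan] using
      Real.le_tan (Real.arctan_nonneg.2 hy) (Real.arctan_lt_pi_div_two y)
  rcases le_total 0 y with hy | hy
  · rw [abs_of_nonneg (Real.arctan_nonneg.2 hy), abs_of_nonneg hy]
    exact arctan_le_self hy
  · rw [abs_of_nonpos (Real.arctan_le_zero.2 hy), abs_of_nonpos hy, ← Real.arctan_neg]
    exact arctan_le_self (neg_nonneg.2 hy)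

theorem Real.abs_tan_le_two_mul_abs {x : ℝ} (hx : |x| ≤ 1) : |Real.tan x| ≤ 2 * |x| := by
  have hcos : 1 / 2 ≤ Real.cos x := by
    nlinarith [Real.one_sub_sq_div_two_le_cos (x := x), sq_abs x, abs_nonneg x]
  rw [Real.tan_eq_sin_div_cos, abs_div, abs_of_pos (show 0 < Real.cos x by linarith),
    div_le_iff₀ (show 0 < Real.cos x by linarith)]
  nlinarith [Real.abs_sin_le_abs (x := x), abs_nonneg x]

theorem abs_alphaL_le (L : ℕ) {x : ℝ} (hx : |x| ≤ 1) : |alphaL L x| ≤ |x| := by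
  have hnot : ¬∃ k : ℤ, x = 2 * π + 4 * π * k := by
    rintro ⟨k, rfl⟩
    have hk : (1 : ℝ) ≤ |1 + 2 * (k : ℝ)| := by
      exact_mod_cast Int.one_le_abs (show (1 + 2 * k : ℤ) ≠ 0 by omega)
    rw [show 2 * π + 4 * π * k = 2 * π * (1 + 2 * k) by ring, abs_mul,
      abs_of_pos Real.two_pi_pos] at hx
    nlinarith [Real.pi_gt_three]
  have htan : |Real.tan (x / 4)| ≤ |x| / 2 := by
    have := Real.abs_tan_le_two_mul_abs (x := x / 4) (by rw [abs_div]; norm_num; linarith)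
    rw [abs_div, abs_of_pos (by norm_num : (0 : ℝ) < 4)] at this
    linarith
  have hpow : |Real.tan (x / 4) ^ (2 * L + 1)| ≤ |x| / 2 := by
    rw [abs_pow]
    exact pow_le_of_le_one (abs_nonneg _) (by linarith) (by omega) |>.trans htan
  rw [alphaL, if_neg hnot, abs_mul, abs_mul, abs_pow, abs_neg, abs_one, one_pow, mul_one, abs_two]
  linarith [Real.abs_arctan_le_abs (Real.tan (x / 4) ^ (2 * L + 1))]

theorem summable_alphaL (L : ℕ) (ω : ℝ) :
    Summable fun j : ℕ => alphaL L (ω / 2 ^ (j + 1)) := by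
  obtain ⟨J, hJ⟩ := pow_unbounded_of_one_lt |ω| one_lt_two
  refine .of_norm_bounded_eventually_nat (summable_geometric_two' |ω|)
    (Filter.eventually_atTop.2 ⟨J, fun j hj => ?_⟩)
  have hsmall : |ω / 2 ^ (j + 1)| = |ω| / 2 / 2 ^ j := by
    rw [abs_div, abs_of_pos (by positivity : (0 : ℝ) < 2 ^ (j + 1)), pow_succ]; ring
  have hle : |ω / 2 ^ (j + 1)| ≤ 1 := by
    rw [abs_div, abs_of_pos (by positivity : (0 : ℝ) < 2 ^ (j + 1)), div_le_one (by positivity)]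
    exact hJ.le.trans (pow_le_pow_right₀ one_le_two (by omega))
  rw [Real.norm_eq_abs, ← hsmall]
  exact abs_alphaL_le L hle

theorem hasSum_alphaL_sub (L : ℕ) (ω : ℝ) :
    HasSum (fun j : ℕ => alphaL L (ω / 2 ^ (j + 1)) - ω / 2 ^ (j + 1) / 2)
      (betaL L ω - ω / 2) := by
  have hgeom : (fun j : ℕ => ω / 2 ^ (j + 1) / 2) = fun j => ω / 2 / 2 / 2 ^ j := by
    funext j
    ring
  exact (summable_alphaL L ω).hasSum.sub (hgeom ▸ hasSum_geometric_two' (ω / 2))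

theorem tprod_exp_I_mul_mul {a : ℕ → ℂ} {x : ℕ → ℝ} {s : ℝ} (hx : HasSum x s)
    (ha : Multipliable a) :
    ∏' j, cexp (I * x j) * a j = cexp (I * s) * ∏' j, a j := by
  have hexp : HasProd (fun j => cexp (I * x j)) (cexp (I * s)) :=
    ((Complex.hasSum_ofReal.2 hx).mul_left I).cexp
  exact (hexp.mul ha.hasProd).tprod_eq

theorem tprod_eq_exp_betaL_mul_tprod {H0 G0 : ℂ → ℂ} (L : ℕ) (c : ℂ)
    (hGH : ∀ θ : ℝ,
      G0 (cexp (I * θ)) = cexp (I * (alphaL L θ - θ / 2 : ℝ)) * H0 (cexp (I * θ)))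
    (ω : ℝ) (hmul : Multipliable fun j : ℕ => c * H0 (cexp (I * (ω / 2 ^ (j + 1) : ℝ)))) :
    ∏' j : ℕ, c * G0 (cexp (I * (ω / 2 ^ (j + 1) : ℝ)))
      = cexp (I * (betaL L ω - ω / 2 : ℝ))
          * ∏' j : ℕ, c * H0 (cexp (I * (ω / 2 ^ (j + 1) : ℝ))) := by
  rw [← tprod_exp_I_mul_mul (hasSum_alphaL_sub L ω) hmul]
  congr with j
  rw [hGH]
  ring

theorem highpass_exp_eq_exp_mul {H0 G0 H1 G1 : ℂ → ℂ} (L : ℕ)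
    (hGH : ∀ θ : ℝ,
      G0 (cexp (I * θ)) = cexp (I * (alphaL L θ - θ / 2 : ℝ)) * H0 (cexp (I * θ)))
    (hH1 : ∀ z : ℂ, z ≠ 0 → H1 z = z⁻¹ * H0 (-z⁻¹))
    (hG1 : ∀ z : ℂ, z ≠ 0 → G1 z = z⁻¹ * G0 (-z⁻¹)) (x : ℝ) :
    G1 (cexp (I * x))
      = cexp (I * (alphaL L (-(x + π)) + (x + π) / 2 : ℝ)) * H1 (cexp (I * x)) := by
  have hflip : -(cexp (I * x))⁻¹ = cexp (I * (-(x + π) : ℝ)) := by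
    rw [← Complex.exp_neg, ← neg_one_mul, ← Complex.exp_neg_pi_mul_I, ← Complex.exp_add]
    push_cast
    ring_nf
  rw [hG1 _ (Complex.exp_ne_zero _), hH1 _ (Complex.exp_ne_zero _), hflip, hGH, neg_div,
    sub_neg_eq_add]
  ring

-- Only the phase is odd: at the exceptional points `α_L(-x) = α_L(x) = ±π`.
theorem exp_I_mul_alphaL_neg_add (L : ℕ) (x y : ℝ) :
    cexp (I * (alphaL L (-x) + y : ℝ)) = cexp (I * (-alphaL L x + y : ℝ)) := by
  have hspecial :
      (∃ k : ℤ, -x = 2 * π + 4 * π * k) ↔ ∃ k : ℤ, x = 2 * π + 4 * π * k :=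
    ⟨fun ⟨k, hk⟩ => ⟨-1 - k, by push_cast; linarith⟩,
      fun ⟨k, hk⟩ => ⟨-1 - k, by push_cast; linarith⟩⟩
  simp only [Complex.ofReal_add, mul_add, Complex.exp_add]
  congr 1
  rw [alphaL, alphaL, if_congr hspecial rfl rfl]
  split_ifs
  · rw [exp_I_mul_neg_one_pow_mul_pi, Complex.ofReal_neg, mul_neg, Complex.exp_neg,
      exp_I_mul_neg_one_pow_mul_pi, inv_neg, inv_one]
  · rw [neg_div, Real.tan_neg, (odd_two_mul_add_one L).neg_pow, Real.arctan_neg, mul_neg]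

theorem I_mul_exp_I_mul_etaL (L : ℕ) (ω : ℝ) :
    I * cexp (I * (etaL L ω : ℂ))
      = cexp (I * (alphaL L (-(ω / 2 + π)) + (ω / 2 + π) / 2 : ℝ))
          * cexp (I * (betaL L (ω / 2) - ω / 2 / 2 : ℝ)) := by
  have hI : I * cexp (I * (etaL L ω : ℂ)) = cexp (π / 2 * I + I * (etaL L ω : ℂ)) := by
    rw [Complex.exp_add, Complex.exp_pi_div_two_mul_I]
  rw [exp_I_mul_alphaL_neg_add, ← Complex.exp_add, hI, etaL]
  push_cast
  ring_nf

theorem commonFactor_wavelet_relation_general (L : ℕ)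
    (F H0 G0 H1 G1 : ℂ → ℂ)
    (hH0 : ∀ z : ℂ, z ≠ 0 → H0 z = F z * DL L z)
    (hG0 : ∀ z : ℂ, z ≠ 0 → G0 z = F z * DL L (1 / z) * z ^ (-(L : ℤ)))
    (hH1 : ∀ z : ℂ, z ≠ 0 → H1 z = z⁻¹ * H0 (-z⁻¹))
    (hG1 : ∀ z : ℂ, z ≠ 0 → G1 z = z⁻¹ * G0 (-z⁻¹))
    (phiH phiG psiH psiG : ℝ → ℂ)
    (hMulH : ∀ ω : ℝ, Multipliable fun j : ℕ =>
      (1 / (Real.sqrt 2 : ℂ)) * H0 (Complex.exp (Complex.I * ((ω / 2 ^ (j + 1) : ℝ) : ℂ))))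
    (hphiH : ∀ ω : ℝ, phiH ω = ∏' j : ℕ,
      (1 / (Real.sqrt 2 : ℂ)) * H0 (Complex.exp (Complex.I * ((ω / 2 ^ (j + 1) : ℝ) : ℂ))))
    (hphiG : ∀ ω : ℝ, phiG ω = ∏' j : ℕ,
      (1 / (Real.sqrt 2 : ℂ)) * G0 (Complex.exp (Complex.I * ((ω / 2 ^ (j + 1) : ℝ) : ℂ))))
    (hpsiH : ∀ ω : ℝ, psiH ω =
      (1 / (Real.sqrt 2 : ℂ)) * H1 (Complex.exp (Complex.I * ((ω / 2 : ℝ) : ℂ))) * phiH (ω / 2))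
    (hpsiG : ∀ ω : ℝ, psiG ω =
      (1 / (Real.sqrt 2 : ℂ)) * G1 (Complex.exp (Complex.I * ((ω / 2 : ℝ) : ℂ))) * phiG (ω / 2)) :
    ∀ ω : ℝ, psiG ω = Complex.I * Complex.exp (Complex.I * (etaL L ω : ℂ)) * psiH ω := by
  intro ω
  have hGH := lowpass_exp_eq_exp_mul_of_commonFactor L hH0 hG0
  have hphi : phiG (ω / 2) = cexp (I * (betaL L (ω / 2) - ω / 2 / 2 : ℝ)) * phiH (ω / 2) := by
    rw [hphiG, hphiH, tprod_eq_exp_betaL_mul_tprod L _ hGH _ (hMulH _)]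
  rw [hpsiG, hpsiH, highpass_exp_eq_exp_mul L hGH hH1 hG1, hphi, I_mul_exp_I_mul_etaL]
  ring

/-- Relation between the mother wavelets `ψ̂_G` and `ψ̂_H` of a
common-factor filter pair. -/
theorem commonFactor_wavelet_relation (L : ℕ) (hL : 0 < L) (N : ℕ) (f : ℕ → ℝ)
    (F H0 G0 H1 G1 : ℂ → ℂ)
    (hF : ∀ z : ℂ, z ≠ 0 → F z = ∑ n ∈ Finset.range (N + 1), (f n : ℂ) * z ^ (-(n : ℤ)))
    (hF1 : F 1 = (Real.sqrt 2 : ℂ) * (2 * (L : ℂ) + 1) * 2 ^ (-(2 * (L : ℤ))))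
    (hH0 : ∀ z : ℂ, z ≠ 0 → H0 z = F z * DL L z)
    (hG0 : ∀ z : ℂ, z ≠ 0 → G0 z = F z * DL L (1 / z) * z ^ (-(L : ℤ)))
    (hH1 : ∀ z : ℂ, z ≠ 0 → H1 z = z⁻¹ * H0 (-z⁻¹))
    (hG1 : ∀ z : ℂ, z ≠ 0 → G1 z = z⁻¹ * G0 (-z⁻¹))
    (phiH phiG psiH psiG : ℝ → ℂ)
    (hMulH : ∀ ω : ℝ, Multipliable fun j : ℕ =>
      (1 / (Real.sqrt 2 : ℂ)) * H0 (Complex.exp (Complex.I * ((ω / 2 ^ (j + 1) : ℝ) : ℂ))))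
    (hMulG : ∀ ω : ℝ, Multipliable fun j : ℕ =>
      (1 / (Real.sqrt 2 : ℂ)) * G0 (Complex.exp (Complex.I * ((ω / 2 ^ (j + 1) : ℝ) : ℂ))))
    (hphiH : ∀ ω : ℝ, phiH ω = ∏' j : ℕ,
      (1 / (Real.sqrt 2 : ℂ)) * H0 (Complex.exp (Complex.I * ((ω / 2 ^ (j + 1) : ℝ) : ℂ))))
    (hphiG : ∀ ω : ℝ, phiG ω = ∏' j : ℕ,
      (1 / (Real.sqrt 2 : ℂ)) * G0 (Complex.exp (Complex.I * ((ω / 2 ^ (j + 1) : ℝ) : ℂ))))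
    (hpsiH : ∀ ω : ℝ, psiH ω =
      (1 / (Real.sqrt 2 : ℂ)) * H1 (Complex.exp (Complex.I * ((ω / 2 : ℝ) : ℂ))) * phiH (ω / 2))
    (hpsiG : ∀ ω : ℝ, psiG ω =
      (1 / (Real.sqrt 2 : ℂ)) * G1 (Complex.exp (Complex.I * ((ω / 2 : ℝ) : ℂ))) * phiG (ω / 2)) :
    ∀ ω : ℝ, psiG ω = Complex.I * Complex.exp (Complex.I * (etaL L ω : ℂ)) * psiH ω :=
  commonFactor_wavelet_relation_general L F H0 G0 H1 G1 hH0 hG0 hH1 hG1 phiH phiG psiH psiG hMulH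
    hphiH hphiG hpsiH hpsiG
end

section
/- Let L and M be positive integers, let r_{L,M} be the unique real polynomial of degree at most M + L − 1 satisfying r(1−y) s_{L,M}(1−y) + r(y) s_{L,M}(y) = (2L+1)² 2^{−2L−2M+1} for all y, and define S(z) = (2 + z + 1/z)^M · D_L(z) · D_L(1/z) for z ∈ ℂ \ {0}. Then for any real polynomial p, the function R(z) = p((2 + z + 1/z)/4) satisfies R(z) S(z) + R(−z) S(−z) = 2 for all z ∈ ℂ \ {0} if and only if there exists a real polynomial q with q(1−y) = −q(y) for all y ∈ ℝ such that p(y) = r_{L,M}(y) + s_{L,M}(1−y) · q(y) for all y ∈ ℝ. -/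
open Polynomial

/-- The real polynomial `s_{L,M}(y) = y^M ∑_{n=0}^{L} C(2L+1, 2n) y^n`. -/
noncomputable def sPoly (L M : ℕ) : Polynomial ℝ :=
  Polynomial.X ^ M *
    ∑ n ∈ Finset.range (L + 1),
      Polynomial.C ((Nat.choose (2 * L + 1) (2 * n) : ℝ)) * Polynomial.X ^ n

/-!
Put `w = (2 + z + 1/z)/4`; then `-z` corresponds to `1 - w`, and every complex `w` is attained
by some `z ≠ 0`. The even binomial sum `E(t) = ∑ₙ C(2L+1, 2n) tⁿ` satisfies
`2 E(x²) = (1 + x)^(2L+1) + (1 - x)^(2L+1)`; comparing this at `x`, `1/x` and `(x + 1/x)/2`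
gives `E(z) E(1/z) = 4^L E(w)`, i.e. `S(z) = 4^(M+L) (2L+1)⁻² s_{L,M}(w)`. So the perfect
reconstruction condition is the polynomial identity `p(y) s(y) + p(1-y) s(1-y) = c`. Since `r`
solves it, `s(1-y)` and `s(y)` are coprime by Bezout; hence any solution is
`p = r + s(1-y) q(y)`, and substituting back forces `q(1-y) = -q(y)`.
-/

open Finset

theorem sum_range_two_mul {M : Type*} [AddCommMonoid M] (N : ℕ) (g : ℕ → M) :
    ∑ k ∈ range (2 * N), g k = ∑ n ∈ range N, (g (2 * n) + g (2 * n + 1)) := by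
  induction N with
  | zero => simp
  | succ n ih => rw [show 2 * (n + 1) = 2 * n + 1 + 1 by ring, sum_range_succ, sum_range_succ, ih,
      sum_range_succ, add_assoc]

theorem four_ne_zero_of_two {K : Type*} [Field K] [NeZero (2 : K)] : (4 : K) ≠ 0 := by
  simpa [show (4 : K) = 2 * 2 by norm_num] using two_ne_zero

def evenChooseSum {R : Type*} [CommSemiring R] (L : ℕ) (t : R) : R :=
  ∑ n ∈ range (L + 1), ((2 * L + 1).choose (2 * n) : R) * t ^ n

theorem two_mul_evenChooseSum_sq {R : Type*} [CommRing R] (L : ℕ) (x : R) :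
    2 * evenChooseSum L (x ^ 2) = (1 + x) ^ (2 * L + 1) + (1 - x) ^ (2 * L + 1) := by
  rw [add_comm 1 x, sub_eq_neg_add, add_pow, add_pow, ← sum_add_distrib,
    show 2 * L + 1 + 1 = 2 * (L + 1) by ring, sum_range_two_mul, evenChooseSum, mul_sum]
  refine sum_congr rfl fun n _ => ?_
  rw [(even_two_mul n).neg_pow, (odd_two_mul_add_one n).neg_pow]
  ring

theorem evenChooseSum_mul_evenChooseSum_inv_sq {K : Type*} [Field K] [NeZero (2 : K)] (L : ℕ)
    {x : K} (hx : x ≠ 0) :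
    evenChooseSum L (x ^ 2) * evenChooseSum L (x⁻¹ ^ 2) =
      4 ^ L * evenChooseSum L (((x + x⁻¹) / 2) ^ 2) := by
  have hodd (a : K) : (-a) ^ (2 * L + 1) = -a ^ (2 * L + 1) := (odd_two_mul_add_one L).neg_pow a
  have hA := two_mul_evenChooseSum_sq L x
  have hB : x ^ (2 * L + 1) * (2 * evenChooseSum L (x⁻¹ ^ 2)) =
      (1 + x) ^ (2 * L + 1) - (1 - x) ^ (2 * L + 1) := by
    rw [two_mul_evenChooseSum_sq, mul_add, ← mul_pow, ← mul_pow,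
      show x * (1 + x⁻¹) = 1 + x by field_simp; ring,
      show x * (1 - x⁻¹) = -(1 - x) by field_simp; ring, hodd]
    ring
  have hC : (2 * x) ^ (2 * L + 1) * (2 * evenChooseSum L (((x + x⁻¹) / 2) ^ 2)) =
      ((1 + x) ^ (2 * L + 1)) ^ 2 - ((1 - x) ^ (2 * L + 1)) ^ 2 := by
    rw [two_mul_evenChooseSum_sq, mul_add, ← mul_pow, ← mul_pow,
      show 2 * x * (1 + (x + x⁻¹) / 2) = (1 + x) ^ 2 by field_simp; ring,
      show 2 * x * (1 - (x + x⁻¹) / 2) = -(1 - x) ^ 2 by field_simp; ring, hodd,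
      pow_right_comm (1 + x), pow_right_comm (1 - x)]
    ring
  have h4 : (2 : K) ^ (2 * L + 1) = 2 * 4 ^ L := by rw [pow_succ, pow_mul]; norm_num; ring
  have hx4 : (2 : K) * 2 * x ^ (2 * L + 1) ≠ 0 := by simp [hx, two_ne_zero]
  apply mul_left_cancel₀ hx4
  rw [mul_pow, h4] at hC
  linear_combination x ^ (2 * L + 1) * (2 * evenChooseSum L (x⁻¹ ^ 2)) * hA +
    ((1 + x) ^ (2 * L + 1) + (1 - x) ^ (2 * L + 1)) * hB - hC

theorem evenChooseSum_mul_evenChooseSum_inv {K : Type*} [Field K] [IsAlgClosed K] [NeZero (2 : K)]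
    (L : ℕ) {z : K} (hz : z ≠ 0) :
    evenChooseSum L z * evenChooseSum L z⁻¹ = 4 ^ L * evenChooseSum L ((2 + z + z⁻¹) / 4) := by
  obtain ⟨x, rfl⟩ := IsAlgClosed.exists_pow_nat_eq z two_pos
  have hx : x ≠ 0 := by rintro rfl; simp at hz
  have h4 : (4 : K) ≠ 0 := four_ne_zero_of_two
  rw [← inv_pow, evenChooseSum_mul_evenChooseSum_inv_sq L hx]
  congr 2
  field_simp
  ring

theorem DL_eq (L : ℕ) {z : ℂ} (hz : z ≠ 0) :
    DL L z = (2 * L + 1 : ℂ)⁻¹ * ((z ^ L)⁻¹ * evenChooseSum L z) := by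
  rw [DL, evenChooseSum, one_div, mul_sum, mul_sum, mul_sum]
  refine sum_congr rfl fun n _ => ?_
  rw [zpow_sub₀ hz, zpow_natCast, zpow_natCast]
  ring

theorem aeval_sPoly {A : Type*} [CommRing A] [Algebra ℝ A] (L M : ℕ) (w : A) :
    aeval w (sPoly L M) = w ^ M * evenChooseSum L w := by
  simp [sPoly, evenChooseSum, map_sum]

theorem pow_mul_DL_mul_DL_inv_eq_aeval_sPoly (L M : ℕ) {z : ℂ} (hz : z ≠ 0) :
    (2 + z + 1 / z) ^ M * DL L z * DL L (1 / z) =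
      ((4 ^ (M + L) / (2 * L + 1) ^ 2 : ℝ) : ℂ) * aeval ((2 + z + 1 / z) / 4) (sPoly L M) := by
  have hzL : (z ^ L)⁻¹ * z ^ L = 1 := inv_mul_cancel₀ (pow_ne_zero L hz)
  have h4M : ((2 + z + z⁻¹) / 4) ^ M * 4 ^ M = (2 + z + z⁻¹) ^ M := by
    rw [← mul_pow, div_mul_cancel₀ _ four_ne_zero_of_two]
  rw [one_div, DL_eq L hz, DL_eq L (inv_ne_zero hz), aeval_sPoly, inv_pow, inv_inv]
  push_cast
  generalize (2 * L + 1 : ℂ) = c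
  calc _ = (2 + z + z⁻¹) ^ M * ((z ^ L)⁻¹ * z ^ L) *
        (evenChooseSum L z * evenChooseSum L z⁻¹) / c ^ 2 := by ring
    _ = (2 + z + z⁻¹) ^ M * 4 ^ L * evenChooseSum L ((2 + z + z⁻¹) / 4) / c ^ 2 := by
        rw [hzL, evenChooseSum_mul_evenChooseSum_inv L hz]; ring
    _ = _ := by rw [← h4M]; ring

-- `(2 + z + 1/z)/4 = (1 + J z)/2` for the Joukowski map `J z = (z + 1/z)/2`;
-- at `z = exp (i ω)` it is `cos² (ω/2)`.
theorem one_sub_joukowski {K : Type*} [Field K] [NeZero (2 : K)] (z : K) :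
    (2 + -z + 1 / -z) / 4 = 1 - (2 + z + 1 / z) / 4 := by
  have h4 : (4 : K) ≠ 0 := four_ne_zero_of_two
  rw [one_div_neg_eq_neg_one_div]
  field_simp
  ring

theorem exists_joukowski_eq {K : Type*} [Field K] [IsAlgClosed K] [NeZero (2 : K)] (w : K) :
    ∃ z : K, z ≠ 0 ∧ (2 + z + 1 / z) / 4 = w := by
  obtain ⟨s, hs⟩ := IsAlgClosed.exists_eq_mul_self (discrim 1 (2 - 4 * w) 1)
  obtain ⟨z, hz⟩ := exists_quadratic_eq_zero (b := 2 - 4 * w) (c := 1) one_ne_zero ⟨s, hs⟩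
  have hz0 : z ≠ 0 := by rintro rfl; simp at hz
  have h4 : (4 : K) ≠ 0 := four_ne_zero_of_two
  refine ⟨z, hz0, ?_⟩
  field_simp
  linear_combination hz

theorem four_pow_mul_two_zpow (L M : ℕ) :
    (4 : ℝ) ^ (M + L) * 2 ^ (-(2 * (L : ℤ)) - 2 * (M : ℤ) + 1) = 2 := by
  rw [show (4 : ℝ) ^ (M + L) = 2 ^ ((2 * (M + L) : ℕ) : ℤ) by rw [zpow_natCast, pow_mul]; norm_num,
    ← zpow_add₀ two_ne_zero]
  push_cast
  ring_nf
  exact zpow_one 2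

theorem perfectReconstruction_iff (L M : ℕ) (p : ℝ[X]) :
    (∀ z : ℂ, z ≠ 0 →
      (aeval ((2 + z + 1 / z) / 4) p) * ((2 + z + 1 / z) ^ M * DL L z * DL L (1 / z)) +
        (aeval ((2 + -z + 1 / (-z)) / 4) p) *
          ((2 + -z + 1 / (-z)) ^ M * DL L (-z) * DL L (1 / (-z))) = 2) ↔
      p * sPoly L M + p.comp (1 - X) * (sPoly L M).comp (1 - X) =
        C ((2 * (L : ℝ) + 1) ^ 2 * (2 : ℝ) ^ (-(2 * (L : ℤ)) - 2 * (M : ℤ) + 1)) := by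
  set P := p * sPoly L M + p.comp (1 - X) * (sPoly L M).comp (1 - X)
  set κ : ℝ := 4 ^ (M + L) / (2 * L + 1) ^ 2
  have hκ : κ * ((2 * (L : ℝ) + 1) ^ 2 * (2 : ℝ) ^ (-(2 * (L : ℤ)) - 2 * (M : ℤ) + 1)) = 2 := by
    simp only [κ]
    field_simp
    exact four_pow_mul_two_zpow L M
  have hsymbol (z : ℂ) (hz : z ≠ 0) :
      (aeval ((2 + z + 1 / z) / 4) p) * ((2 + z + 1 / z) ^ M * DL L z * DL L (1 / z)) +
        (aeval ((2 + -z + 1 / (-z)) / 4) p) *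
          ((2 + -z + 1 / (-z)) ^ M * DL L (-z) * DL L (1 / (-z))) =
        κ * aeval ((2 + z + 1 / z) / 4) P := by
    rw [pow_mul_DL_mul_DL_inv_eq_aeval_sPoly L M hz,
      pow_mul_DL_mul_DL_inv_eq_aeval_sPoly L M (neg_ne_zero.2 hz), one_sub_joukowski]
    simp only [P, map_add, map_mul, aeval_comp, map_sub, map_one, aeval_X]
    ring
  constructor
  · intro h
    refine Polynomial.funext fun y => ?_
    obtain ⟨z, hz, hzy⟩ := exists_joukowski_eq (y : ℂ)
    have hy := h z hz
    rw [hsymbol z hz, hzy, ← Complex.coe_algebraMap, aeval_algebraMap_apply_eq_algebraMap_eval,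
      Complex.coe_algebraMap] at hy
    rw [eval_C]
    exact mul_left_cancel₀ (by positivity)
      ((show κ * eval y P = 2 by exact_mod_cast hy).trans hκ.symm)
  · intro h z hz
    rw [hsymbol z hz, h, aeval_C, Complex.coe_algebraMap]
    exact_mod_cast hκ

theorem mul_add_comp_mul_comp_eq_C_iff {K : Type*} [Field K] {φ r s p : K[X]} {c : K}
    (hφ : φ.comp φ = X) (hc : c ≠ 0) (hr : r * s + r.comp φ * s.comp φ = C c) :
    p * s + p.comp φ * s.comp φ = C c ↔ ∃ q : K[X], q.comp φ = -q ∧ p = r + s.comp φ * q := by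
  have comp_comp (f : K[X]) : (f.comp φ).comp φ = f := by rw [comp_assoc, hφ, comp_X]
  constructor
  · intro hp
    have hs : s ≠ 0 := by
      rintro rfl
      simp only [mul_zero, zero_comp, add_zero] at hr
      exact hc (C_eq_zero.1 hr.symm)
    have hsφ : s.comp φ ≠ 0 := by
      intro h
      exact hs (by rw [← comp_comp s, h, zero_comp])
    have hCc : C c⁻¹ * C c = 1 := by rw [← C_mul, inv_mul_cancel₀ hc, C_1]
    have hcop : IsCoprime (s.comp φ) s :=
      ⟨C c⁻¹ * r.comp φ, C c⁻¹ * r, by linear_combination C c⁻¹ * hr + hCc⟩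
    obtain ⟨q, hq⟩ : s.comp φ ∣ p - r :=
      hcop.dvd_of_dvd_mul_right ⟨-(p - r).comp φ, by rw [sub_comp]; linear_combination hp - hr⟩
    have hqφ : s * s.comp φ * (q.comp φ + q) = 0 := by
      have := congrArg (·.comp φ) hq
      simp only [sub_comp, mul_comp, comp_comp] at this
      linear_combination hp - hr - s.comp φ * this - s * hq
    refine ⟨q, ?_, ?_⟩
    · linear_combination (mul_eq_zero.1 hqφ).resolve_left (mul_ne_zero hs hsφ)
    · linear_combination hq
  · rintro ⟨q, hq, rfl⟩
    rw [add_comp, mul_comp, comp_comp, hq]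
    linear_combination hr

theorem eq_iff_forall_eval_eq {R : Type*} [CommRing R] [IsDomain R] [Infinite R] {f g : R[X]} :
    f = g ↔ ∀ y, f.eval y = g.eval y :=
  ⟨fun h _ => h ▸ rfl, Polynomial.funext⟩

theorem PR_solutions_characterization_general (L M : ℕ)
    (r : Polynomial ℝ)
    (hr : ∀ y : ℝ,
      r.eval (1 - y) * (sPoly L M).eval (1 - y) + r.eval y * (sPoly L M).eval y =
        (2 * (L : ℝ) + 1) ^ 2 * (2 : ℝ) ^ (-(2 * (L : ℤ)) - 2 * (M : ℤ) + 1))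
    (p : Polynomial ℝ) :
    (∀ z : ℂ, z ≠ 0 →
      (Polynomial.aeval ((2 + z + 1 / z) / 4) p) *
          ((2 + z + 1 / z) ^ M * DL L z * DL L (1 / z)) +
        (Polynomial.aeval ((2 + -z + 1 / (-z)) / 4) p) *
          ((2 + -z + 1 / (-z)) ^ M * DL L (-z) * DL L (1 / (-z))) = 2) ↔
    (∃ q : Polynomial ℝ, (∀ y : ℝ, q.eval (1 - y) = -q.eval y) ∧
      ∀ y : ℝ, p.eval y = r.eval y + (sPoly L M).eval (1 - y) * q.eval y) := by
  have hσ : (1 - X : ℝ[X]).comp (1 - X) = X := by simp [sub_comp]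
  have hc : (2 * (L : ℝ) + 1) ^ 2 * (2 : ℝ) ^ (-(2 * (L : ℤ)) - 2 * (M : ℤ) + 1) ≠ 0 := by
    positivity
  have hr' : r * sPoly L M + r.comp (1 - X) * (sPoly L M).comp (1 - X) =
      C ((2 * (L : ℝ) + 1) ^ 2 * (2 : ℝ) ^ (-(2 * (L : ℤ)) - 2 * (M : ℤ) + 1)) :=
    eq_iff_forall_eval_eq.2 fun y => by simpa [add_comm] using hr y
  rw [perfectReconstruction_iff, mul_add_comp_mul_comp_eq_C_iff hσ hc hr']
  simp only [eq_iff_forall_eval_eq, eval_comp, eval_sub, eval_one, eval_X, eval_neg, eval_add,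
    eval_mul]

/-- characterization of all polynomial solutions of the perfect
reconstruction equation `R(z) S(z) + R(-z) S(-z) = 2` of the form
`R(z) = p((2 + z + 1/z)/4)`. -/
theorem PR_solutions_characterization (L M : ℕ) (hL : 0 < L) (hM : 0 < M)
    (r : Polynomial ℝ)
    (hrdeg : r.natDegree ≤ M + L - 1)
    (hr : ∀ y : ℝ,
      r.eval (1 - y) * (sPoly L M).eval (1 - y) + r.eval y * (sPoly L M).eval y =
        (2 * (L : ℝ) + 1) ^ 2 * (2 : ℝ) ^ (-(2 * (L : ℤ)) - 2 * (M : ℤ) + 1))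
    (p : Polynomial ℝ) :
    (∀ z : ℂ, z ≠ 0 →
      (Polynomial.aeval ((2 + z + 1 / z) / 4) p) *
          ((2 + z + 1 / z) ^ M * DL L z * DL L (1 / z)) +
        (Polynomial.aeval ((2 + -z + 1 / (-z)) / 4) p) *
          ((2 + -z + 1 / (-z)) ^ M * DL L (-z) * DL L (1 / (-z))) = 2) ↔
    (∃ q : Polynomial ℝ, (∀ y : ℝ, q.eval (1 - y) = -q.eval y) ∧
      ∀ y : ℝ, p.eval y = r.eval y + (sPoly L M).eval (1 - y) * q.eval y) :=
  PR_solutions_characterization_general L M r hr p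
end
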